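/- arXiv:1904.03572 — 3 statements merged into one kernel-verified Lean document; each statement's English description precedes it below -/
import Mathlib

section
/- If an open set U ⊆ C^{l1}×...×C^{ln} is a domain of C^n-holomorphy, then U is C^n-holomorphically convex (i.e., for every compact K ⊆ U, the hull K̂ = { z ∈ U : |f(z)| ≤ sup_K |f| for all f ∈ O_{l1,...,ln}(U) } is compact). -/
open Set Metric

/-- `f : ℂ^{l 0} × ... × ℂ^{l (n-1)} → ℂ^n` is `ℂⁿ`-holomorphic on `U`:
holomorphic, and for `i ≠ j` the partial derivative of the `i`-th component
in every direction of the `j`-th coordinate block vanishes. -/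
def CnHolo {n : ℕ} {l : Fin n → ℕ} (U : Set (∀ j, Fin (l j) → ℂ))
    (f : (∀ j, Fin (l j) → ℂ) → (Fin n → ℂ)) : Prop :=
  DifferentiableOn ℂ f U ∧
    ∀ a ∈ U, ∀ i j : Fin n, i ≠ j → ∀ v : Fin (l j) → ℂ,
      fderiv ℂ (fun z => f z i) a (Pi.single j v) = 0

/-- The `ℂⁿ`-holomorphically convex hull of `K` in `U` (sup-norms throughout). -/
def cnHull {n : ℕ} {l : Fin n → ℕ} (U K : Set (∀ j, Fin (l j) → ℂ)) :
    Set (∀ j, Fin (l j) → ℂ) :=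
  {z ∈ U | ∀ f, CnHolo U f → ‖f z‖ ≤ sSup ((fun w => ‖f w‖) '' K)}

/-- `U` is a domain of `ℂⁿ`-existence. -/
def IsDomainOfCnExistence {n : ℕ} {l : Fin n → ℕ}
    (U : Set (∀ j, Fin (l j) → ℂ)) : Prop :=
  ∃ f, CnHolo U f ∧ ∀ V W : Set (∀ j, Fin (l j) → ℂ), IsOpen V → IsOpen W →
    IsConnected V → (V \ U).Nonempty → W.Nonempty → W ⊆ U ∩ V →
    ∀ g, CnHolo V g → ¬ Set.EqOn f g W

/-- `U` is a domain of `ℂⁿ`-holomorphy. -/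
def IsDomainOfCnHolomorphy {n : ℕ} {l : Fin n → ℕ}
    (U : Set (∀ j, Fin (l j) → ℂ)) : Prop :=
  ∀ V W : Set (∀ j, Fin (l j) → ℂ), IsOpen V → IsOpen W →
    IsConnected V → (V \ U).Nonempty → W.Nonempty → W ⊆ U ∩ V →
    ∃ f, CnHolo U f ∧ ∀ g, CnHolo V g → ¬ Set.EqOn f g W

/-- `U` is `ℂⁿ`-holomorphically convex. -/
def IsCnHoloConvex {n : ℕ} {l : Fin n → ℕ}
    (U : Set (∀ j, Fin (l j) → ℂ)) : Prop :=
  ∀ K ⊆ U, IsCompact K → IsCompact (cnHull U K)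

/-!
Let `K ⊆ U` be compact and `r > 0` with `cthickening r K ⊆ U`. The hull `K̂` is bounded because
the coordinate maps `w ↦ Pi.single j (w j k)` are `ℂⁿ`-holomorphic, and it is closed as soon as
`ball z (r / 4) ⊆ U` for every `z ∈ K̂`. If this failed for some `z`, then, `U` being a domain of
`ℂⁿ`-holomorphy, some `f` would not extend from a small ball around `z` to `ball z (r / 4)`. But
the Taylor terms `x ↦ (1 / m!) dᵐf(x)(v, …, v)` are again `ℂⁿ`-holomorphic on `U` (Cauchy's
formula on complex lines, differentiated in `x` and `v`), so Cauchy's estimates on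
`cthickening r K` and the definition of `K̂` bound them by `M / 2ᵐ` at `z` for `‖v‖ ≤ r / 2`.
The Taylor series of `f` at `z` then converges to a `ℂⁿ`-holomorphic extension to `ball z (r / 4)`.
-/

open Complex Filter MeasureTheory Topology
open scoped Nat Real

section LineTaylorCoeff

variable {E F : Type*} [NormedAddCommGroup E] [NormedSpace ℂ E]
  [NormedAddCommGroup F] [NormedSpace ℂ F]

/-- `(1 / m!) dᵐf(x)(v, …, v)`, the degree-`m` term of the Taylor expansion of `f` at `x`,
computed on the complex line `ζ ↦ x + ζ • v`. -/
noncomputable def lineTaylorCoeff (f : E → F) (m : ℕ) (x v : E) : F :=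
  (m ! : ℂ)⁻¹ • iteratedDeriv m (fun ζ : ℂ => f (x + ζ • v)) 0

theorem HasFDerivAt.hasDerivAt_comp_line {f : E → F} {f' : E →L[ℂ] F} {x v : E} {ζ : ℂ}
    (hf : HasFDerivAt f f' (x + ζ • v)) : HasDerivAt (fun ζ : ℂ => f (x + ζ • v)) (f' v) ζ := by
  have := hf.comp_hasDerivAt ζ (((hasDerivAt_id ζ).smul_const v).const_add x)
  rwa [one_smul] at this

theorem DifferentiableOn.comp_line {f : E → F} {s : Set E} (hf : DifferentiableOn ℂ f s) {x v : E}
    {t : Set ℂ} (hts : MapsTo (fun ζ : ℂ => x + ζ • v) t s) :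
    DifferentiableOn ℂ (fun ζ : ℂ => f (x + ζ • v)) t :=
  hf.comp ((differentiable_id.smul_const v).const_add x).differentiableOn hts

theorem norm_fderiv_le_of_forall_mem_ball_norm_le {f : E → F} {x : E} {s M : ℝ} (hs : 0 < s)
    (hf : DifferentiableOn ℂ f (ball x s)) (hM : ∀ y ∈ ball x s, ‖f y‖ ≤ M) :
    ‖fderiv ℂ f x‖ ≤ 2 * M / s := by
  have hM0 : 0 ≤ M := (norm_nonneg _).trans (hM x (mem_ball_self hs))
  refine ContinuousLinearMap.opNorm_le_bound _ (by positivity) fun v => ?_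
  rcases eq_or_ne v 0 with rfl | hv
  · simp
  have hv : 0 < ‖v‖ := norm_pos_iff.mpr hv
  set ρ := s / (2 * ‖v‖) with hρ_def
  have hρ : 0 < ρ := by positivity
  have hline : MapsTo (fun ζ : ℂ => x + ζ • v) (closedBall 0 ρ) (ball x s) := by
    intro ζ hζ
    rw [mem_closedBall_zero_iff] at hζ
    rw [mem_ball, dist_eq_norm, add_sub_cancel_left, norm_smul]
    calc ‖ζ‖ * ‖v‖ ≤ ρ * ‖v‖ := by gcongr
      _ = s / 2 := by rw [hρ_def]; field_simp
      _ < s := by linarith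
  have hderiv : deriv (fun ζ : ℂ => f (x + ζ • v)) 0 = fderiv ℂ f x v :=
    (HasFDerivAt.hasDerivAt_comp_line (by simpa using
      (hf.differentiableAt (isOpen_ball.mem_nhds (mem_ball_self hs))).hasFDerivAt)).deriv
  have := norm_deriv_le_of_forall_mem_sphere_norm_le hρ
    ((hf.comp_line hline).diffContOnCl_ball subset_rfl)
    fun ζ hζ => hM _ (hline (sphere_subset_closedBall hζ))
  calc ‖fderiv ℂ f x v‖ ≤ M / ρ := hderiv ▸ this
    _ = 2 * M / s * ‖v‖ := by rw [hρ_def]; field_simp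

theorem IsCompact.exists_isOpen_superset_forall_norm_fderiv_le [ProperSpace E] {f : E → F}
    {U : Set E} (hU : IsOpen U) (hf : DifferentiableOn ℂ f U) {K : Set E} (hK : IsCompact K)
    (hKU : K ⊆ U) : ∃ V, IsOpen V ∧ K ⊆ V ∧ V ⊆ U ∧ ∃ B, ∀ y ∈ V, ‖fderiv ℂ f y‖ ≤ B := by
  obtain ⟨δ, hδ, hδU⟩ := hK.exists_cthickening_subset_open hU hKU
  obtain ⟨M, hM⟩ := hK.cthickening.exists_bound_of_continuousOn (hf.continuousOn.mono hδU)
  have hball : ∀ y ∈ thickening (δ / 2) K, ball y (δ / 2) ⊆ cthickening δ K := fun y hy =>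
    calc ball y (δ / 2) ⊆ thickening (δ / 2) (thickening (δ / 2) K) :=
          ball_subset_thickening hy _
      _ ⊆ thickening (δ / 2 + δ / 2) K := thickening_thickening_subset _ _ _
      _ ⊆ cthickening δ K := by rw [add_halves]; exact thickening_subset_cthickening δ K
  refine ⟨thickening (δ / 2) K, isOpen_thickening, self_subset_thickening (by positivity) K,
    (thickening_subset_cthickening _ _).trans ((cthickening_mono (by linarith) K).trans hδU),
    2 * M / (δ / 2), fun y hy => ?_⟩
  exact norm_fderiv_le_of_forall_mem_ball_norm_le (by positivity)
    (hf.mono ((hball y hy).trans hδU)) fun w hw => hM w (hball y hy hw)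

theorem eventually_forall_line_mem {U : Set E} (hU : IsOpen U) {K : Set ℂ} (hK : IsCompact K)
    {p₀ : E × E} (h : ∀ z ∈ K, p₀.1 + z • p₀.2 ∈ U) :
    ∀ᶠ p in 𝓝 p₀, ∀ z ∈ K, p.1 + z • p.2 ∈ U :=
  hK.eventually_forall_of_forall_eventually fun z hz =>
    (show Continuous fun q : (E × E) × ℂ => q.1.1 + q.2 • q.1.2 by fun_prop).continuousAt
      |>.eventually_mem (hU.mem_nhds (h z hz))

theorem hasFDerivAt_circleIntegral_of_dominated {H : Type*} [NormedAddCommGroup H]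
    [NormedSpace ℂ H] {G : H → ℂ → F} {G' : H → ℂ → H →L[ℂ] F} {p₀ : H} {c : ℂ} {R ε C : ℝ}
    (hε : 0 < ε) (hG : ∀ p ∈ ball p₀ ε, ContinuousOn (G p) (sphere c |R|))
    (hG'_meas : AEStronglyMeasurable (fun θ => G' p₀ (circleMap c R θ)))
    (hG' : ∀ p ∈ ball p₀ ε, ∀ z ∈ sphere c |R|, HasFDerivAt (G · z) (G' p z) p)
    (hC : ∀ p ∈ ball p₀ ε, ∀ z ∈ sphere c |R|, ‖G' p z‖ ≤ C) :
    HasFDerivAt (fun p => ∮ z in C(c, R), G p z) (∮ z in C(c, R), G' p₀ z) p₀ := by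
  simp only [circleIntegral, deriv_circleMap]
  have hγ' : Continuous fun θ => circleMap 0 R θ * I := (continuous_circleMap 0 R).mul
    continuous_const
  have hcont : ∀ p ∈ ball p₀ ε, Continuous fun θ => (circleMap 0 R θ * I) • G p (circleMap c R θ) :=
    fun p hp => hγ'.smul <| (hG p hp).comp_continuous (continuous_circleMap c R)
      (circleMap_mem_sphere' c R)
  refine intervalIntegral.hasFDerivAt_integral_of_dominated_of_fderiv_le (bound := fun _ => |R| * C)
    (F' := fun p θ => (circleMap 0 R θ * I) • G' p (circleMap c R θ))
    (ball_mem_nhds p₀ hε) ?_ ((hcont p₀ (mem_ball_self hε)).intervalIntegrable _ _)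
    (hγ'.aestronglyMeasurable.smul hG'_meas).restrict ?_ intervalIntegrable_const ?_
  · filter_upwards [ball_mem_nhds p₀ hε] with p hp
    exact (hcont p hp).aestronglyMeasurable
  · refine .of_forall fun θ _ p hp => ?_
    rw [norm_smul, norm_mul, norm_circleMap_zero, Complex.norm_I, mul_one]
    exact mul_le_mul_of_nonneg_left (hC p hp _ (circleMap_mem_sphere' c R θ)) (abs_nonneg R)
  · exact .of_forall fun θ _ p hp => (hG' p hp _ (circleMap_mem_sphere' c R θ)).const_smul _

variable [CompleteSpace F]

theorem norm_lineTaylorCoeff_le {f : E → F} {s : Set E} (hf : DifferentiableOn ℂ f s) {x v : E}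
    {R C : ℝ} (hR : 0 < R) (hline : MapsTo (fun ζ : ℂ => x + ζ • v) (closedBall 0 R) s)
    (hC : ∀ ζ ∈ sphere (0 : ℂ) R, ‖f (x + ζ • v)‖ ≤ C) (m : ℕ) :
    ‖lineTaylorCoeff f m x v‖ ≤ C / R ^ m := by
  have := norm_iteratedDeriv_le_of_forall_mem_sphere_norm_le m hR
    ((hf.comp_line hline).diffContOnCl_ball subset_rfl) hC
  rw [lineTaylorCoeff, norm_smul, norm_inv, Complex.norm_natCast]
  calc (m ! : ℝ)⁻¹ * ‖iteratedDeriv m (fun ζ : ℂ => f (x + ζ • v)) 0‖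
      ≤ (m ! : ℝ)⁻¹ * (m ! * C / R ^ m) := by gcongr
    _ = C / R ^ m := by field_simp

theorem hasSum_lineTaylorCoeff {f : E → F} {s : Set E} (hf : DifferentiableOn ℂ f s) {x v : E}
    {R : ℝ} (hR : 1 < R) (hline : MapsTo (fun ζ : ℂ => x + ζ • v) (ball 0 R) s) :
    HasSum (fun m => lineTaylorCoeff f m x v) (f (x + v)) := by
  simpa [lineTaylorCoeff] using
    hasSum_taylorSeries_on_ball (hf.comp_line hline) (z := 1) (by simpa using hR)

theorem eqOn_tsum_lineTaylorCoeff {f : E → F} {z : E} {d : ℝ}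
    (hf : DifferentiableOn ℂ f (ball z d)) :
    EqOn f (fun y => ∑' m, lineTaylorCoeff f m z (y - z)) (ball z d) := by
  intro y hy
  rw [mem_ball, dist_eq_norm] at hy
  have hd : 0 < d := (norm_nonneg _).trans_lt hy
  set b := (d + ‖y - z‖) / 2 with hb_def
  have hyb : ‖y - z‖ < b := by linarith
  have hbd : b < d := by linarith
  have hb : 0 < b := (norm_nonneg _).trans_lt hyb
  have hline : MapsTo (fun ζ : ℂ => z + ζ • (y - z)) (ball 0 (d / b)) (ball z d) := by
    intro ζ hζ
    rw [mem_ball_zero_iff] at hζ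
    rw [mem_ball, dist_eq_norm, add_sub_cancel_left, norm_smul]
    calc ‖ζ‖ * ‖y - z‖ ≤ d / b * ‖y - z‖ := by gcongr
      _ < d := by
        rw [div_mul_eq_mul_div, div_lt_iff₀ hb]
        exact mul_lt_mul_of_pos_left hyb hd
  have := (hasSum_lineTaylorCoeff hf ((one_lt_div hb).mpr hbd) hline).tsum_eq
  rw [add_sub_cancel] at this
  exact this.symm

theorem lineTaylorCoeff_eq_circleIntegral {f : E → F} {s : Set E} (hf : DifferentiableOn ℂ f s)
    {x v : E} {R : ℝ} (hR : 0 < R) (hline : MapsTo (fun ζ : ℂ => x + ζ • v) (closedBall 0 R) s)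
    (m : ℕ) : lineTaylorCoeff f m x v =
      (2 * π * I)⁻¹ • ∮ z in C(0, R), (1 / z ^ (m + 1)) • f (x + z • v) := by
  have := ((hf.comp_line hline).diffContOnCl_ball
    subset_rfl).circleIntegral_one_div_sub_center_pow_smul hR m
  simp only [sub_zero] at this
  rw [this, smul_smul, lineTaylorCoeff]
  congr 1
  field_simp

theorem ContinuousLinearMap.map_circleIntegral_eq_zero {G : Type*} [NormedAddCommGroup G]
    [NormedSpace ℂ G] [CompleteSpace G] (Λ : F →L[ℂ] G) {f : ℂ → F} {c : ℂ} {R : ℝ}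
    (h : ∀ z ∈ sphere c |R|, Λ (f z) = 0) : Λ (∮ z in C(c, R), f z) = 0 := by
  by_cases hf : CircleIntegrable f c R
  · rw [circleIntegral, ← Λ.intervalIntegral_comp_comm ((circleIntegrable_iff R).mp hf)]
    simp [h _ (circleMap_mem_sphere' c R _)]
  · rw [circleIntegral.integral_undef hf, map_zero]

end LineTaylorCoeff

section FiniteDimensional

variable {E F : Type*} [NormedAddCommGroup E] [NormedSpace ℂ E] [FiniteDimensional ℂ E]
  [NormedAddCommGroup F] [NormedSpace ℂ F] [FiniteDimensional ℂ F]
  {f : E → F} {U : Set E}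

theorem hasFDerivAt_circleIntegral_smul_comp_line (hU : IsOpen U) (hf : DifferentiableOn ℂ f U)
    {k : ℂ → ℂ} {R : ℝ} (hk : ContinuousOn k (sphere 0 |R|)) {p₀ : E × E}
    (hp₀ : ∀ z ∈ sphere (0 : ℂ) |R|, p₀.1 + z • p₀.2 ∈ U) :
    HasFDerivAt (fun p : E × E => ∮ z in C(0, R), k z • f (p.1 + z • p.2))
      (∮ z in C(0, R), k z • (fderiv ℂ f (p₀.1 + z • p₀.2)).comp
        (ContinuousLinearMap.fst ℂ E E + z • ContinuousLinearMap.snd ℂ E E)) p₀ := by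
  set L : ℂ → E × E →L[ℂ] E := fun z =>
    ContinuousLinearMap.fst ℂ E E + z • ContinuousLinearMap.snd ℂ E E
  have hline : Continuous fun z : ℂ => p₀.1 + z • p₀.2 := by fun_prop
  obtain ⟨V, hV, hp₀V, hVU, B, hB⟩ :=
    ((isCompact_sphere (0 : ℂ) |R|).image hline).exists_isOpen_superset_forall_norm_fderiv_le
      hU hf (by rintro _ ⟨z, hz, rfl⟩; exact hp₀ z hz)
  obtain ⟨ε, hε, hεV⟩ := Metric.eventually_nhds_iff_ball.mp <|
    eventually_forall_line_mem hV (isCompact_sphere 0 |R|) fun z hz => hp₀V ⟨z, hz, rfl⟩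
  obtain ⟨Ck, hCk⟩ := (isCompact_sphere (0 : ℂ) |R|).exists_bound_of_continuousOn hk
  have hL : ∀ z ∈ sphere (0 : ℂ) |R|, ‖L z‖ ≤ 1 + |R| := fun z hz => by
    refine (norm_add_le _ _).trans (add_le_add (ContinuousLinearMap.norm_fst_le ℂ E E) ?_)
    rw [norm_smul, mem_sphere_zero_iff_norm.mp hz]
    exact mul_le_of_le_one_right (abs_nonneg R) (ContinuousLinearMap.norm_snd_le ℂ E E)
  have hderiv : ∀ p ∈ ball p₀ ε, ∀ z ∈ sphere (0 : ℂ) |R|,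
      HasFDerivAt (fun p : E × E => f (p.1 + z • p.2))
        ((fderiv ℂ f (p.1 + z • p.2)).comp (L z)) p :=
    fun p hp z hz => (hf.differentiableAt (hU.mem_nhds (hVU (hεV p hp z hz)))).hasFDerivAt.comp p
      (L z).hasFDerivAt
  refine hasFDerivAt_circleIntegral_of_dominated hε (C := Ck * (B * (1 + |R|)))
    (fun p hp => hk.smul <| hf.continuousOn.comp (by fun_prop : Continuous fun z : ℂ =>
      p.1 + z • p.2).continuousOn fun z hz => hVU (hεV p hp z hz)) ?_
    (fun p hp z hz => (hderiv p hp z hz).const_smul (k z)) fun p hp z hz => ?_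
  · borelize E
    have hfderiv : AEStronglyMeasurable fun θ => fderiv ℂ f (p₀.1 + circleMap 0 R θ • p₀.2) :=
      ((measurable_fderiv ℂ f).comp (hline.comp (continuous_circleMap 0 R)).measurable)
        |>.aestronglyMeasurable
    exact (hk.comp_continuous (continuous_circleMap 0 R)
      (circleMap_mem_sphere' 0 R)).aestronglyMeasurable.smul <|
      Continuous.comp_aestronglyMeasurable₂ (g := fun (A : E →L[ℂ] F) z => A.comp (L z))
        (by fun_prop) hfderiv (continuous_circleMap 0 R).aestronglyMeasurable
  · have hBp := hB _ (hεV p hp z hz)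
    rw [norm_smul]
    exact mul_le_mul (hCk z hz) ((ContinuousLinearMap.opNorm_comp_le _ _).trans
      (mul_le_mul hBp (hL z hz) (norm_nonneg _) ((norm_nonneg _).trans hBp)))
      (by positivity) ((norm_nonneg _).trans (hCk z hz))

/-- Near `p₀`, the coefficient is a circle integral over a fixed circle, which can be
differentiated under the integral sign. -/
theorem exists_hasFDerivAt_lineTaylorCoeff (hU : IsOpen U) (hf : DifferentiableOn ℂ f U) (m : ℕ)
    {p₀ : E × E} (hp₀ : p₀.1 ∈ U) :
    ∃ R > 0, (∀ z ∈ sphere (0 : ℂ) R, p₀.1 + z • p₀.2 ∈ U) ∧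
      HasFDerivAt (fun p : E × E => lineTaylorCoeff f m p.1 p.2)
        ((2 * π * I)⁻¹ • ∮ z in C(0, R), (1 / z ^ (m + 1)) • (fderiv ℂ f (p₀.1 + z • p₀.2)).comp
          (ContinuousLinearMap.fst ℂ E E + z • ContinuousLinearMap.snd ℂ E E)) p₀ := by
  have hline : Continuous fun z : ℂ => p₀.1 + z • p₀.2 := by fun_prop
  obtain ⟨R, hR, hRU⟩ := Metric.nhds_basis_closedBall.mem_iff.mp <|
    (hline.continuousAt (x := 0)).preimage_mem_nhds (by simpa using hU.mem_nhds hp₀)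
  have hsphere : ∀ z ∈ sphere (0 : ℂ) |R|, p₀.1 + z • p₀.2 ∈ U := fun z hz =>
    hRU (sphere_subset_closedBall (by rwa [abs_of_pos hR] at hz))
  have hk : ContinuousOn (fun z : ℂ => 1 / z ^ (m + 1)) (sphere 0 |R|) :=
    continuousOn_const.div (continuousOn_pow _) fun z hz =>
      pow_ne_zero _ (ne_of_mem_sphere hz (abs_pos.mpr hR.ne').ne')
  refine ⟨R, hR, by simpa [abs_of_pos hR] using hsphere, ?_⟩
  refine ((hasFDerivAt_circleIntegral_smul_comp_line hU hf hk hsphere).const_smul _)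
    |>.congr_of_eventuallyEq ?_
  filter_upwards [eventually_forall_line_mem hU (isCompact_closedBall 0 R) hRU] with p hp
  exact lineTaylorCoeff_eq_circleIntegral hf hR hp m

theorem differentiableAt_lineTaylorCoeff (hU : IsOpen U) (hf : DifferentiableOn ℂ f U) (m : ℕ)
    {p₀ : E × E} (hp₀ : p₀.1 ∈ U) :
    DifferentiableAt ℂ (fun p : E × E => lineTaylorCoeff f m p.1 p.2) p₀ :=
  let ⟨_, _, _, hD⟩ := exists_hasFDerivAt_lineTaylorCoeff hU hf m hp₀
  hD.differentiableAt

theorem map_fderiv_lineTaylorCoeff_eq_zero {G : Type*} [NormedAddCommGroup G] [NormedSpace ℂ G]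
    [CompleteSpace G] (hU : IsOpen U) (hf : DifferentiableOn ℂ f U) (m : ℕ) {p₀ : E × E}
    (hp₀ : p₀.1 ∈ U) (L : F →L[ℂ] G) {S : Submodule ℂ E}
    (hS : ∀ y ∈ U, ∀ s ∈ S, L (fderiv ℂ f y s) = 0) {w : E × E} (hw₁ : w.1 ∈ S) (hw₂ : w.2 ∈ S) :
    L (fderiv ℂ (fun p : E × E => lineTaylorCoeff f m p.1 p.2) p₀ w) = 0 := by
  obtain ⟨R, hR, hRU, hD⟩ := exists_hasFDerivAt_lineTaylorCoeff hU hf m hp₀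
  rw [hD.fderiv, smul_apply, map_smul]
  refine smul_eq_zero_of_right _ ?_
  refine (L.comp (ContinuousLinearMap.apply ℂ F w)).map_circleIntegral_eq_zero
    (f := fun z : ℂ => (1 / z ^ (m + 1)) • (fderiv ℂ f (p₀.1 + z • p₀.2)).comp
      (ContinuousLinearMap.fst ℂ E E + z • ContinuousLinearMap.snd ℂ E E)) fun z hz => ?_
  rw [abs_of_pos hR] at hz
  change L ((1 / z ^ (m + 1)) • fderiv ℂ f (p₀.1 + z • p₀.2) (w.1 + z • w.2)) = 0
  rw [map_smul, hS _ (hRU z hz) _ (S.add_mem hw₁ (S.smul_mem z hw₂)), smul_zero]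

end FiniteDimensional

section CnHolo

variable {n : ℕ} {l : Fin n → ℕ}

def coordBlock (l : Fin n → ℕ) (j : Fin n) : Submodule ℂ (∀ j, Fin (l j) → ℂ) :=
  LinearMap.range (LinearMap.single ℂ (fun j => Fin (l j) → ℂ) j)

theorem cnHolo_iff_of_isOpen {U : Set (∀ j, Fin (l j) → ℂ)} (hU : IsOpen U)
    {f : (∀ j, Fin (l j) → ℂ) → (Fin n → ℂ)} :
    CnHolo U f ↔ ∀ a ∈ U, DifferentiableAt ℂ f a ∧
      ∀ i j, i ≠ j → ∀ s ∈ coordBlock l j, fderiv ℂ f a s i = 0 := by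
  have hcomp : ∀ a ∈ U, DifferentiableOn ℂ f U → ∀ i s,
      fderiv ℂ (fun z => f z i) a s = fderiv ℂ f a s i := fun a ha hf i s => by
    have hD : HasFDerivAt (fun z => f z i)
        ((ContinuousLinearMap.proj i : (Fin n → ℂ) →L[ℂ] ℂ).comp (fderiv ℂ f a)) a :=
      (ContinuousLinearMap.proj i : (Fin n → ℂ) →L[ℂ] ℂ).hasFDerivAt.comp a
        (hf.differentiableAt (hU.mem_nhds ha)).hasFDerivAt
    rw [hD.fderiv]
    rfl
  constructor
  · rintro ⟨hf, hblock⟩ a ha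
    refine ⟨hf.differentiableAt (hU.mem_nhds ha), ?_⟩
    rintro i j hij _ ⟨v, rfl⟩
    rw [← hcomp a ha hf]
    exact hblock a ha i j hij v
  · intro h
    have hf : DifferentiableOn ℂ f U := fun a ha => (h a ha).1.differentiableWithinAt
    refine ⟨hf, fun a ha i j hij v => ?_⟩
    rw [hcomp a ha hf]
    exact (h a ha).2 i j hij _ ⟨v, rfl⟩

variable {U K : Set (∀ j, Fin (l j) → ℂ)} {f : (∀ j, Fin (l j) → ℂ) → (Fin n → ℂ)}

theorem cnHolo_lineTaylorCoeff (hU : IsOpen U) (hf : CnHolo U f) (m : ℕ)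
    (v : ∀ j, Fin (l j) → ℂ) : CnHolo U (fun x => lineTaylorCoeff f m x v) := by
  have hblock := (cnHolo_iff_of_isOpen hU).mp hf
  refine (cnHolo_iff_of_isOpen hU).mpr fun a ha => ?_
  have hD := (differentiableAt_lineTaylorCoeff hU hf.1 m (p₀ := (a, v)) ha).hasFDerivAt.comp a
    (hasFDerivAt_prodMk_left (𝕜 := ℂ) a v)
  refine ⟨hD.differentiableAt, fun i j hij s hs => ?_⟩
  rw [HasFDerivAt.fderiv (f := fun x => lineTaylorCoeff f m x v) hD]
  exact map_fderiv_lineTaylorCoeff_eq_zero hU hf.1 m ha (ContinuousLinearMap.proj i)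
    (fun y hy s hs => (hblock y hy).2 i j hij s hs) (w := (s, 0)) hs (zero_mem _)

theorem cnHolo_lineTaylorCoeff_sub (hU : IsOpen U) (hf : CnHolo U f) (m : ℕ)
    {z : ∀ j, Fin (l j) → ℂ} (hz : z ∈ U) (V : Set (∀ j, Fin (l j) → ℂ)) (hV : IsOpen V) :
    CnHolo V (fun y => lineTaylorCoeff f m z (y - z)) := by
  have hblock := (cnHolo_iff_of_isOpen hU).mp hf
  refine (cnHolo_iff_of_isOpen hV).mpr fun a _ => ?_
  have hD := (differentiableAt_lineTaylorCoeff hU hf.1 m (p₀ := (z, a - z)) hz).hasFDerivAt.comp a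
    ((hasFDerivAt_const (𝕜 := ℂ) z a).prodMk ((hasFDerivAt_id a).sub_const z))
  refine ⟨hD.differentiableAt, fun i j hij s hs => ?_⟩
  rw [HasFDerivAt.fderiv (f := fun y => lineTaylorCoeff f m z (y - z)) hD]
  exact map_fderiv_lineTaylorCoeff_eq_zero hU hf.1 m hz (ContinuousLinearMap.proj i)
    (fun y hy s hs => (hblock y hy).2 i j hij s hs) (w := (0, s)) (zero_mem _) hs

theorem cnHolo_tsum {s : Set (∀ j, Fin (l j) → ℂ)} (hs : IsOpen s) (hs' : IsPreconnected s)
    {t : ℕ → (∀ j, Fin (l j) → ℂ) → (Fin n → ℂ)} (ht : ∀ m, CnHolo s (t m)) {u : ℕ → ℝ}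
    (hu : Summable u) (htu : ∀ m, ∀ y ∈ s, ‖fderiv ℂ (t m) y‖ ≤ u m) {y₀ : ∀ j, Fin (l j) → ℂ}
    (hy₀ : y₀ ∈ s) (hsum : Summable fun m => t m y₀) :
    CnHolo s (fun y => ∑' m, t m y) := by
  simp only [cnHolo_iff_of_isOpen hs] at ht ⊢
  intro a ha
  have hD := hasFDerivAt_tsum_of_isPreconnected hu hs hs'
    (fun m y hy => (ht m y hy).1.hasFDerivAt) htu hy₀ hsum ha
  refine ⟨hD.differentiableAt, fun i j hij v hv => ?_⟩
  rw [hD.fderiv]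
  have key := ((ContinuousLinearMap.proj i : (Fin n → ℂ) →L[ℂ] ℂ).comp
    (ContinuousLinearMap.apply ℂ (Fin n → ℂ) v)).map_tsum
    (.of_norm_bounded hu fun m => htu m a ha)
  simp only [ContinuousLinearMap.comp_apply, ContinuousLinearMap.apply_apply,
    ContinuousLinearMap.proj_apply, (ht _ a ha).2 i j hij v hv, tsum_zero] at key
  exact key

theorem cnHolo_single_apply (U : Set (∀ j, Fin (l j) → ℂ)) (j : Fin n) (k : Fin (l j)) :
    CnHolo U (fun w => Pi.single j (w j k)) := by
  let L : (∀ j, Fin (l j) → ℂ) →L[ℂ] (Fin n → ℂ) :=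
    (ContinuousLinearMap.single ℂ (fun _ => ℂ) j).comp
      ((ContinuousLinearMap.proj k : (Fin (l j) → ℂ) →L[ℂ] ℂ).comp
        (ContinuousLinearMap.proj j : (∀ j, Fin (l j) → ℂ) →L[ℂ] (Fin (l j) → ℂ)))
  refine ⟨L.differentiable.differentiableOn, fun a _ i j' hij v => ?_⟩
  rw [show (fun w => (Pi.single j (w j k) : Fin n → ℂ) i) =
    (ContinuousLinearMap.proj i : (Fin n → ℂ) →L[ℂ] ℂ).comp L from rfl, ContinuousLinearMap.fderiv]
  rcases eq_or_ne i j with rfl | hi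
  · simp [L, Pi.single_eq_of_ne hij]
  · simp [L, Pi.single_eq_of_ne hi]

theorem norm_lineTaylorCoeff_le_of_mem_cnHull (hU : IsOpen U) (hf : CnHolo U f) {r M : ℝ}
    (hM0 : 0 ≤ M) (hrU : cthickening r K ⊆ U) (hM : ∀ y ∈ cthickening r K, ‖f y‖ ≤ M)
    {z : ∀ j, Fin (l j) → ℂ} (hz : z ∈ cnHull U K) {v : ∀ j, Fin (l j) → ℂ} (hv : ‖v‖ ≤ r / 2)
    (m : ℕ) : ‖lineTaylorCoeff f m z v‖ ≤ M / 2 ^ m := by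
  refine (hz.2 _ (cnHolo_lineTaylorCoeff hU hf m v)).trans (Real.sSup_le ?_ (by positivity))
  rintro _ ⟨w, hw, rfl⟩
  have hline : MapsTo (fun ζ : ℂ => w + ζ • v) (closedBall 0 2) (cthickening r K) := by
    intro ζ hζ
    refine mem_cthickening_of_dist_le _ w r K hw ?_
    rw [dist_eq_norm, add_sub_cancel_left, norm_smul]
    calc ‖ζ‖ * ‖v‖ ≤ 2 * (r / 2) := by
          gcongr
          · exact mem_closedBall_zero_iff.mp hζ
      _ = r := by ring
  exact norm_lineTaylorCoeff_le (hf.1.mono hrU) two_pos hline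
    (fun ζ hζ => hM _ (hline (sphere_subset_closedBall hζ))) m

/-- Cauchy's estimate bounds the derivatives of the terms geometrically, so the series can be
differentiated termwise. -/
theorem cnHolo_tsum_lineTaylorCoeff (hU : IsOpen U) (hf : CnHolo U f)
    {z : ∀ j, Fin (l j) → ℂ} (hz : z ∈ U) {ρ M : ℝ} (hρ : 0 < ρ)
    (hM : ∀ m v, ‖v‖ < 2 * ρ → ‖lineTaylorCoeff f m z v‖ ≤ M / 2 ^ m) :
    CnHolo (ball z ρ) (fun y => ∑' m, lineTaylorCoeff f m z (y - z)) := by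
  have hterm : ∀ m, ∀ y ∈ ball z (2 * ρ), ‖lineTaylorCoeff f m z (y - z)‖ ≤ M / 2 ^ m :=
    fun m y hy => hM m _ (by rwa [mem_ball, dist_eq_norm] at hy)
  have hgeom : Summable fun m : ℕ => M / 2 ^ m := by
    simpa [div_eq_mul_inv] using summable_geometric_two.mul_left M
  refine cnHolo_tsum isOpen_ball (convex_ball z ρ).isPreconnected
    (fun m => cnHolo_lineTaylorCoeff_sub hU hf m hz _ isOpen_ball) (hgeom.mul_left (2 / ρ))
    (fun m y hy => ?_) (mem_ball_self hρ)
    (.of_norm_bounded hgeom fun m => hterm m z (mem_ball_self (by positivity)))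
  have hball : ball y ρ ⊆ ball z (2 * ρ) := fun w hw => by
    rw [mem_ball] at hw hy ⊢
    linarith [dist_triangle w y z]
  calc ‖fderiv ℂ (fun y => lineTaylorCoeff f m z (y - z)) y‖ ≤ 2 * (M / 2 ^ m) / ρ :=
        norm_fderiv_le_of_forall_mem_ball_norm_le hρ
          ((cnHolo_lineTaylorCoeff_sub hU hf m hz _ isOpen_ball).1.mono hball)
          fun w hw => hterm m w (hball hw)
    _ = 2 / ρ * (M / 2 ^ m) := by ring

theorem ball_subset_of_mem_cnHull (hU : IsOpen U) (h : IsDomainOfCnHolomorphy U)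
    (hK : IsCompact K) {r : ℝ} (hr : 0 < r) (hrU : cthickening r K ⊆ U)
    {z : ∀ j, Fin (l j) → ℂ} (hz : z ∈ cnHull U K) : ball z (r / 4) ⊆ U := by
  by_contra hsub
  obtain ⟨w, hwV, hwU⟩ := not_subset.mp hsub
  obtain ⟨d, hd, hdU⟩ := Metric.isOpen_iff.mp (hU.inter (isOpen_ball (x := z) (ε := r / 4))) z
    ⟨hz.1, mem_ball_self (by positivity)⟩
  obtain ⟨f, hf, hext⟩ := h (ball z (r / 4)) (ball z d) isOpen_ball isOpen_ball
    (Metric.isConnected_ball (by positivity)) ⟨w, hwV, hwU⟩ ⟨z, mem_ball_self hd⟩ hdU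
  obtain ⟨M, hM⟩ := hK.cthickening.exists_bound_of_continuousOn (hf.1.continuousOn.mono hrU)
  refine hext _ (cnHolo_tsum_lineTaylorCoeff hU hf hz.1 (M := max M 0) (by positivity)
    fun m v hv => norm_lineTaylorCoeff_le_of_mem_cnHull hU hf (le_max_right M 0) hrU
      (fun y hy => (hM y hy).trans (le_max_left M 0)) hz (by linarith) m) ?_
  exact eqOn_tsum_lineTaylorCoeff (hf.1.mono fun y hy => (hdU hy).1)

theorem isBounded_cnHull (U K : Set (∀ j, Fin (l j) → ℂ)) : Bornology.IsBounded (cnHull U K) := by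
  refine Bornology.forall_isBounded_image_eval_iff.mp fun j =>
    Bornology.forall_isBounded_image_eval_iff.mp fun k => ?_
  rw [image_image]
  refine isBounded_iff_forall_norm_le.mpr
    ⟨sSup ((fun w => ‖(Pi.single j (w j k) : Fin n → ℂ)‖) '' K), ?_⟩
  rintro _ ⟨z, hz, rfl⟩
  simpa [Pi.norm_single] using hz.2 _ (cnHolo_single_apply U j k)

theorem isClosed_cnHull_of_forall_ball_subset (hU : IsOpen U) {ρ : ℝ} (hρ : 0 < ρ)
    (h : ∀ z ∈ cnHull U K, ball z ρ ⊆ U) : IsClosed (cnHull U K) := by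
  refine isClosed_of_closure_subset fun x hx => ?_
  obtain ⟨y, hy, hxy⟩ := Metric.mem_closure_iff.mp hx ρ hρ
  have hxU : x ∈ U := h y hy hxy
  refine ⟨hxU, fun f hf => ?_⟩
  exact ContinuousWithinAt.closure_le hx
    (hf.1.continuousOn.continuousAt (hU.mem_nhds hxU)).norm.continuousWithinAt
    continuousWithinAt_const fun y hy => hy.2 f hf

end CnHolo

/-- A domain of `ℂⁿ`-holomorphy is `ℂⁿ`-holomorphically convex. -/
theorem isCnHoloConvex_of_isDomainOfCnHolomorphy {n : ℕ} {l : Fin n → ℕ}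
    (U : Set (∀ j, Fin (l j) → ℂ)) (hU : IsOpen U)
    (h : IsDomainOfCnHolomorphy U) : IsCnHoloConvex U := by
  intro K hKU hK
  obtain ⟨r, hr, hrU⟩ := hK.exists_cthickening_subset_open hU hKU
  exact isCompact_of_isClosed_isBounded
    (isClosed_cnHull_of_forall_ball_subset hU (by positivity) fun z hz =>
      ball_subset_of_mem_cnHull hU h hK hr hrU hz)
    (isBounded_cnHull U K)
end

section
/- Let U_j be nonempty connected open subsets of C^{l_j} and K_j compact subsets of U_j for j = 1,...,n, and set U := U_1 × ... × U_n, K := K_1 × ... × K_n. Then the C^n-holomorphically convex hull of K in U equals the product of the ordinary holomorphically convex hulls: K̂^U_{l1,...,ln} = (K_1)̂^{U_1} × ... × (K_n)̂^{U_n}. -/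
/-!
A `ℂⁿ`-holomorphic map whose `i`-th component has vanishing partial derivatives in every other
block is, on the connected product `U`, a function of `z i` alone in that component. Hence for
`k ∈ K` the slice `w ↦ f (update k i w) i` is holomorphic on `U i`, agrees with `f · i` at `z`,
and is bounded on `K i` by `sup_K ‖f‖`, so the hull of `K i` controls `‖f z i‖`. Conversely,
the maps `w ↦ Pi.single j (g (w j))` are `ℂⁿ`-holomorphic and test the `j`-th factor against
every holomorphic `g` on `U j`. Testing with the constant `1` shows that the hull of an empty
compact is empty, which supplies the point `k`.
-/

open Set Metric

/-- The ordinary holomorphically convex hull of `K` in `U ⊆ ℂ^m`. -/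
def holoHull {m : ℕ} (U K : Set (Fin m → ℂ)) : Set (Fin m → ℂ) :=
  {z ∈ U | ∀ f : (Fin m → ℂ) → ℂ, DifferentiableOn ℂ f U →
    ‖f z‖ ≤ sSup ((fun w => ‖f w‖) '' K)}

open Function

section Pi

variable {ι : Type*} [Fintype ι] [DecidableEq ι]

theorem apply_eq_of_forall_update_eq {α : ι → Type*} {U : ∀ j, Set (α j)}
    {β : Type*} {f : (∀ j, α j) → β} {i : ι}
    (hf : ∀ j ≠ i, ∀ y ∈ univ.pi U, ∀ c ∈ U j, f (update y j c) = f y)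
    {a b : ∀ j, α j} (ha : a ∈ univ.pi U) (hb : b ∈ univ.pi U) (hab : a i = b i) :
    f a = f b := by
  have hpiece : ∀ s : Finset ι, i ∉ s → f (s.piecewise b a) = f a := by
    intro s
    induction s using Finset.induction_on with
    | empty => simp
    | insert j s _ ih =>
      intro hi
      rw [Finset.mem_insert, not_or] at hi
      rw [Finset.piecewise_insert, hf j (Ne.symm hi.1) _ (Finset.piecewise_mem_set_pi _ hb ha)
        (b j) (hb j trivial), ih hi.2]
  rw [← hpiece _ (Finset.notMem_erase i _), Finset.piecewise_erase_univ, hab,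
    update_eq_self]

section Differentiable

variable {E : ι → Type*} [∀ j, NormedAddCommGroup (E j)] {F : Type*} [NormedAddCommGroup F]
  {𝕜 : Type*} [NontriviallyNormedField 𝕜] [∀ j, NormedSpace 𝕜 (E j)] [NormedSpace 𝕜 F]

theorem DifferentiableOn.comp_update {f : (∀ j, E j) → F} {s : Set (∀ j, E j)} {i : ι}
    {t : Set (E i)} (hf : DifferentiableOn 𝕜 f s) {y : ∀ j, E j}
    (hy : MapsTo (update y i) t s) :
    DifferentiableOn 𝕜 (fun w => f (update y i w)) t :=
  hf.comp (fun w _ => (hasFDerivAt_update y w).differentiableAt.differentiableWithinAt) hy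

theorem fderiv_comp_apply_single_of_ne {i k : ι} {g : E i → F} {a : ∀ j, E j}
    (hg : DifferentiableAt 𝕜 g (a i)) (hki : k ≠ i) (v : E k) :
    fderiv 𝕜 (fun w => g (w i)) a (Pi.single k v) = 0 := by
  have hcomp : HasFDerivAt (fun w => g (w i)) ((fderiv 𝕜 g (a i)).comp (.proj i)) a :=
    hg.hasFDerivAt.comp a (hasFDerivAt_apply i a)
  rw [hcomp.fderiv, ContinuousLinearMap.comp_apply,
    ContinuousLinearMap.proj_apply, Pi.single_eq_of_ne' hki, map_zero]

theorem apply_update_eq_of_fderiv_single_eq_zero [∀ j, NormedSpace ℂ (E j)]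
    [NormedSpace ℂ F] {U : ∀ j, Set (E j)} {f : (∀ j, E j) → F} {j : ι}
    (hUo : ∀ k, IsOpen (U k)) (hUj : IsPreconnected (U j))
    (hf : DifferentiableOn ℂ f (univ.pi U))
    (hfj : ∀ a ∈ univ.pi U, ∀ v, fderiv ℂ f a (Pi.single j v) = 0)
    {y : ∀ k, E k} (hy : y ∈ univ.pi U) {c : E j} (hc : c ∈ U j) :
    f (update y j c) = f y := by
  have hUpi : IsOpen (univ.pi U) := isOpen_set_pi finite_univ fun k _ => hUo k
  have hmaps : MapsTo (update y j) (U j) (univ.pi U) :=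
    fun w hw => (update_mem_pi_iff_of_mem hy).2 fun _ => hw
  have hderiv : EqOn (fderiv ℂ fun w => f (update y j w)) 0 (U j) := by
    intro w hw
    have hfw := hf.differentiableAt (hUpi.mem_nhds (hmaps hw))
    ext1 v
    rw [fderiv_fun_comp w hfw (hasFDerivAt_update y w).differentiableAt, fderiv_update,
      ContinuousLinearMap.comp_apply]
    have hsingle : ContinuousLinearMap.pi (Pi.single j (.id ℂ (E j))) v = Pi.single j v := by
      ext k
      rcases eq_or_ne k j with rfl | hkj <;> simp [*]
    rw [hsingle, hfj _ (hmaps hw) v, Pi.zero_apply, zero_apply]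
  calc f (update y j c) = f (update y j (y j)) :=
        (hUo j).is_const_of_fderiv_eq_zero hUj (hf.comp_update hmaps) hderiv hc (hy j trivial)
    _ = f y := by rw [update_eq_self]

end Differentiable

end Pi

theorem norm_le_sSup_image_norm {X E : Type*} [TopologicalSpace X] [SeminormedAddCommGroup E]
    {K : Set X} {f : X → E} (hK : IsCompact K) (hf : ContinuousOn f K) {x : X} (hx : x ∈ K) :
    ‖f x‖ ≤ sSup ((fun w => ‖f w‖) '' K) :=
  le_csSup (hK.image_of_continuousOn hf.norm).bddAbove (mem_image_of_mem _ hx)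

theorem sSup_image_norm_nonneg {X E : Type*} [SeminormedAddCommGroup E] (K : Set X)
    (f : X → E) : 0 ≤ sSup ((fun w => ‖f w‖) '' K) :=
  Real.sSup_nonneg (forall_mem_image.2 fun _ _ => norm_nonneg _)

theorem nonempty_of_mem_holoHull {m : ℕ} {U K : Set (Fin m → ℂ)} {z : Fin m → ℂ}
    (hz : z ∈ holoHull U K) : K.Nonempty := by
  by_contra hK
  have h := hz.2 (fun _ => 1) (differentiableOn_const 1)
  rw [not_nonempty_iff_eq_empty.1 hK] at h
  norm_num at h

section CnHolo

variable {n : ℕ} {l : Fin n → ℕ} {U : ∀ j, Set (Fin (l j) → ℂ)}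

theorem CnHolo.apply_eq_of_apply_eq (hUo : ∀ j, IsOpen (U j))
    (hUc : ∀ j, IsPreconnected (U j)) {f : (∀ j, Fin (l j) → ℂ) → (Fin n → ℂ)}
    (hf : CnHolo (univ.pi U) f) {a b : ∀ j, Fin (l j) → ℂ} (ha : a ∈ univ.pi U)
    (hb : b ∈ univ.pi U) {i : Fin n} (hab : a i = b i) : f a i = f b i :=
  apply_eq_of_forall_update_eq (f := fun z => f z i)
    (fun j hji _ hy _ hc => apply_update_eq_of_fderiv_single_eq_zero hUo (hUc j)
      (differentiableOn_pi.1 hf.1 i) (fun a ha v => hf.2 a ha i j hji.symm v) hy hc)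
    ha hb hab

theorem cnHolo_single_comp_apply {j : Fin n} (hUj : IsOpen (U j))
    {g : (Fin (l j) → ℂ) → ℂ} (hg : DifferentiableOn ℂ g (U j)) :
    CnHolo (univ.pi U) (fun w => Pi.single j (g (w j))) := by
  have hgj : DifferentiableOn ℂ (fun w : ∀ k, Fin (l k) → ℂ => g (w j)) (univ.pi U) :=
    hg.comp (differentiableOn_apply j _) fun w hw => hw j trivial
  refine ⟨(ContinuousLinearMap.single ℂ (fun _ => ℂ) j).differentiable.comp_differentiableOn
    hgj, fun a ha i k hik v => ?_⟩
  rcases eq_or_ne i j with rfl | hij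
  · simp only [Pi.single_eq_same]
    exact fderiv_comp_apply_single_of_ne (E := fun k => Fin (l k) → ℂ)
      (hg.differentiableAt (hUj.mem_nhds (ha i trivial))) hik.symm v
  · simp only [Pi.single_eq_of_ne hij, fderiv_const_apply]
    rfl

theorem cnHull_univ_pi_subset {K : ∀ j, Set (Fin (l j) → ℂ)} (hUo : ∀ j, IsOpen (U j))
    (hKc : ∀ j, IsCompact (K j)) (hKU : ∀ j, K j ⊆ U j) :
    cnHull (univ.pi U) (univ.pi K) ⊆ univ.pi fun j => holoHull (U j) (K j) := by
  intro z hz j _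
  refine ⟨hz.1 j trivial, fun g hg => ?_⟩
  have hgK (w) (hw : w ∈ K j) : ‖g w‖ ≤ sSup ((fun w => ‖g w‖) '' K j) :=
    norm_le_sSup_image_norm (hKc j) (hg.continuousOn.mono (hKU j)) hw
  calc ‖g (z j)‖ = ‖(Pi.single j (g (z j)) : Fin n → ℂ)‖ :=
        (Pi.norm_single (G := fun _ => ℂ) _).symm
    _ ≤ sSup ((fun w => ‖Pi.single j (g (w j))‖) '' univ.pi K) :=
      hz.2 _ (cnHolo_single_comp_apply (hUo j) hg)
    _ ≤ sSup ((fun w => ‖g w‖) '' K j) :=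
      Real.sSup_le (forall_mem_image.2 fun w hw =>
        (Pi.norm_single (G := fun _ => ℂ) _).trans_le (hgK _ (hw j trivial)))
        (sSup_image_norm_nonneg _ _)

theorem univ_pi_holoHull_subset {K : ∀ j, Set (Fin (l j) → ℂ)} (hUo : ∀ j, IsOpen (U j))
    (hUc : ∀ j, IsPreconnected (U j)) (hKc : ∀ j, IsCompact (K j)) (hKU : ∀ j, K j ⊆ U j) :
    univ.pi (fun j => holoHull (U j) (K j)) ⊆ cnHull (univ.pi U) (univ.pi K) := by
  intro z hz
  have hzU : z ∈ univ.pi U := fun j _ => (hz j trivial).1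
  obtain ⟨k, hk⟩ : (univ.pi K).Nonempty :=
    univ_pi_nonempty_iff.2 fun j => nonempty_of_mem_holoHull (hz j trivial)
  refine ⟨hzU, fun f hf => ?_⟩
  have hfK (w) (hw : w ∈ univ.pi K) : ‖f w‖ ≤ sSup ((fun w => ‖f w‖) '' univ.pi K) :=
    norm_le_sSup_image_norm (isCompact_univ_pi hKc)
      (hf.1.continuousOn.mono (pi_mono fun j _ => hKU j)) hw
  refine (pi_norm_le_iff_of_nonneg ((norm_nonneg _).trans (hfK k hk))).2 fun i => ?_
  have hkU : k ∈ univ.pi U := pi_mono (fun j _ => hKU j) hk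
  have hslice : DifferentiableOn ℂ (fun w => f (update k i w) i) (U i) :=
    (differentiableOn_pi.1 hf.1 i).comp_update fun w hw =>
      (update_mem_pi_iff_of_mem hkU).2 fun _ => hw
  have hzk : f z i = f (update k i (z i)) i :=
    hf.apply_eq_of_apply_eq hUo hUc hzU
      ((update_mem_pi_iff_of_mem hkU).2 fun _ => hzU i trivial) (update_self i (z i) k).symm
  calc ‖f z i‖ = ‖f (update k i (z i)) i‖ := by rw [hzk]
    _ ≤ sSup ((fun w => ‖f (update k i w) i‖) '' K i) := (hz i trivial).2 _ hslice
    _ ≤ sSup ((fun w => ‖f w‖) '' univ.pi K) :=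
      Real.sSup_le (forall_mem_image.2 fun w hw => (norm_le_pi_norm _ i).trans
          (hfK _ ((update_mem_pi_iff_of_mem hk).2 fun _ => hw)))
        (sSup_image_norm_nonneg _ _)

end CnHolo

/-- For products of nonempty connected open sets and compacts, the
`ℂⁿ`-holomorphically convex hull of the product is the product of the ordinary
holomorphically convex hulls. -/
theorem cnHull_pi {n : ℕ} {l : Fin n → ℕ}
    (U K : ∀ j, Set (Fin (l j) → ℂ))
    (hUo : ∀ j, IsOpen (U j)) (hUc : ∀ j, IsConnected (U j))
    (hKc : ∀ j, IsCompact (K j)) (hKU : ∀ j, K j ⊆ U j) :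
    cnHull (Set.univ.pi U) (Set.univ.pi K) =
      Set.univ.pi (fun j => holoHull (U j) (K j)) :=
  (cnHull_univ_pi_subset hUo hKc hKU).antisymm
    (univ_pi_holoHull_subset hUo (fun j => (hUc j).isPreconnected) hKc hKU)
end

section
/- Let U be a convex open subset of C^{l1}×...×C^{ln} and let f ∈ O_{l1,...,ln}(U). Then there exists g ∈ O_{l1,...,ln}(π1(U) × π2(U) × ... × πn(U)) such that f = g restricted to U. (Here U ⊆ π1(U)×...×πn(U).) -/
/-!
Fix a block `i`. On the convex set `U` the `i`-th component `f_i` has vanishing derivative in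
every direction with zero `i`-th block, in particular along the segment joining two points
`u, u'` with `u i = u' i`; hence `f_i u = f_i u'`. So `g z i := f u i`, for any `u ∈ U` with
`u i = z i`, is well defined on the product of the projections, extends `f`, and near each
point `z` it equals `ζ ↦ f (update w i (ζ i)) i` for a fixed `w ∈ U`: a holomorphic function
of the `i`-th block alone, whence `g` is `ℂⁿ`-holomorphic.
-/

open Set Metric

open Filter Topology

theorem eq_of_hasFDerivAt_apply_sub_eq_zero {E F : Type*} [NormedAddCommGroup E]
    [NormedSpace ℝ E] [NormedAddCommGroup F] [NormedSpace ℝ F] {φ : E → F}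
    {φ' : E → E →L[ℝ] F} {x y : E} (hφ : ∀ a ∈ segment ℝ x y, HasFDerivAt φ (φ' a) a)
    (hφ' : ∀ a ∈ segment ℝ x y, φ' a (y - x) = 0) : φ x = φ y := by
  have hγ : ∀ t ∈ Icc (0 : ℝ) 1, AffineMap.lineMap x y t ∈ segment ℝ x y := fun t ht =>
    segment_eq_image_lineMap ℝ x y ▸ mem_image_of_mem _ ht
  have hderiv : ∀ t ∈ Icc (0 : ℝ) 1, HasDerivAt (φ ∘ AffineMap.lineMap x y) 0 t := by
    intro t ht
    simpa [hφ' _ (hγ t ht)] using (hφ _ (hγ t ht)).comp_hasDerivAt t AffineMap.hasDerivAt_lineMap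
  have hconst := constant_of_has_deriv_right_zero
    (fun t ht => (hderiv t ht).continuousAt.continuousWithinAt)
    (fun t ht => (hderiv t (Ico_subset_Icc_self ht)).hasDerivWithinAt) 1
    (right_mem_Icc.2 zero_le_one)
  simpa using hconst.symm

section Blocks

variable {n : ℕ} {l : Fin n → ℕ}

theorem CnHolo.fderiv_apply_eq_zero {U : Set (∀ j, Fin (l j) → ℂ)}
    {f : (∀ j, Fin (l j) → ℂ) → (Fin n → ℂ)} (hf : CnHolo U f) {a : ∀ j, Fin (l j) → ℂ}
    (ha : a ∈ U) {i : Fin n} {v : ∀ j, Fin (l j) → ℂ} (hv : v i = 0) :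
    fderiv ℂ (fun z => f z i) a v = 0 := by
  rw [← Finset.univ_sum_single v, map_sum]
  refine Finset.sum_eq_zero fun j _ => ?_
  rcases eq_or_ne i j with rfl | hij
  · simp [hv]
  · exact hf.2 a ha i j hij (v j)

theorem CnHolo.apply_eq_of_apply_eq_s17 {U : Set (∀ j, Fin (l j) → ℂ)} (hU : IsOpen U)
    (hconv : Convex ℝ U) {f : (∀ j, Fin (l j) → ℂ) → (Fin n → ℂ)} (hf : CnHolo U f)
    {i : Fin n} {u u' : ∀ j, Fin (l j) → ℂ} (hu : u ∈ U) (hu' : u' ∈ U) (hi : u i = u' i) :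
    f u i = f u' i := by
  have hdiff : ∀ a ∈ U, DifferentiableAt ℂ (fun z => f z i) a := fun a ha =>
    differentiableAt_pi.1 (hf.1.differentiableAt (hU.mem_nhds ha)) i
  refine eq_of_hasFDerivAt_apply_sub_eq_zero
    (fun a ha => ((hdiff a (hconv.segment_subset hu hu' ha)).hasFDerivAt.restrictScalars ℝ))
    (fun a ha => hf.fderiv_apply_eq_zero (hconv.segment_subset hu hu' ha) ?_)
  simp [hi]

theorem fderiv_comp_apply_single_of_ne_s17 {𝕜 ι G : Type*} [NontriviallyNormedField 𝕜] [Fintype ι]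
    [DecidableEq ι] {E : ι → Type*} [∀ i, NormedAddCommGroup (E i)] [∀ i, NormedSpace 𝕜 (E i)]
    [NormedAddCommGroup G] [NormedSpace 𝕜 G] {i j : ι} {ψ : E i → G} {z : ∀ k, E k}
    (hψ : DifferentiableAt 𝕜 ψ (z i)) (hij : i ≠ j) (v : E j) :
    fderiv 𝕜 (fun z : ∀ k, E k => ψ (z i)) z (Pi.single j v) = 0 := by
  have hcomp : HasFDerivAt (fun z : ∀ k, E k => ψ (z i))
      ((fderiv 𝕜 ψ (z i)).comp (ContinuousLinearMap.proj i)) z :=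
    hψ.hasFDerivAt.comp z (hasFDerivAt_apply i z)
  simp [hcomp.fderiv, Pi.single_eq_of_ne hij]

theorem cnHolo_of_locally_blockwise {S : Set (∀ j, Fin (l j) → ℂ)}
    {g : (∀ j, Fin (l j) → ℂ) → (Fin n → ℂ)}
    (hg : ∀ z ∈ S, ∀ i, ∃ ψ : (Fin (l i) → ℂ) → ℂ, DifferentiableAt ℂ ψ (z i) ∧
      (fun z' => g z' i) =ᶠ[𝓝 z] fun z' => ψ (z' i)) : CnHolo S g := by
  refine ⟨fun z hz => (differentiableAt_pi.2 fun i => ?_).differentiableWithinAt,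
    fun z hz i j hij v => ?_⟩
  · obtain ⟨ψ, hψ, heq⟩ := hg z hz i
    exact (hψ.comp z (differentiableAt_apply i z)).congr_of_eventuallyEq heq
  · obtain ⟨ψ, hψ, heq⟩ := hg z hz i
    rw [heq.fderiv_eq]
    exact fderiv_comp_apply_single_of_ne_s17 (E := fun j => Fin (l j) → ℂ) hψ hij v

open Classical in
/-- Independent of the choice of `u` by `CnHolo.apply_eq_of_apply_eq`; the value `0` off the
product of the projections of `U` is junk. -/
noncomputable def cnHoloExtension (U : Set (∀ j, Fin (l j) → ℂ))
    (f : (∀ j, Fin (l j) → ℂ) → (Fin n → ℂ)) : (∀ j, Fin (l j) → ℂ) → Fin n → ℂ :=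
  fun z i => if h : ∃ u ∈ U, u i = z i then f h.choose i else 0

section Extension

variable {U : Set (∀ j, Fin (l j) → ℂ)} {f : (∀ j, Fin (l j) → ℂ) → (Fin n → ℂ)}

theorem cnHoloExtension_apply (hU : IsOpen U) (hconv : Convex ℝ U) (hf : CnHolo U f)
    {i : Fin n} {u z : ∀ j, Fin (l j) → ℂ} (hu : u ∈ U) (hz : u i = z i) :
    cnHoloExtension U f z i = f u i := by
  have hex : ∃ u ∈ U, u i = z i := ⟨u, hu, hz⟩
  rw [cnHoloExtension, dif_pos hex]
  exact hf.apply_eq_of_apply_eq_s17 hU hconv hex.choose_spec.1 hu (hex.choose_spec.2.trans hz.symm)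

theorem cnHoloExtension_eventuallyEq (hU : IsOpen U) (hconv : Convex ℝ U) (hf : CnHolo U f)
    {z : ∀ j, Fin (l j) → ℂ} (hz : z ∈ univ.pi fun j => (fun u => u j) '' U) (i : Fin n) :
    ∃ ψ : (Fin (l i) → ℂ) → ℂ, DifferentiableAt ℂ ψ (z i) ∧
      (fun z' => cnHoloExtension U f z' i) =ᶠ[𝓝 z] fun z' => ψ (z' i) := by
  obtain ⟨w, hw, hwi⟩ := hz i (mem_univ i)
  have hwz : Function.update w i (z i) = w := by rw [← hwi, Function.update_eq_self]
  have hV : IsOpen {ζ | Function.update w i ζ ∈ U} :=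
    hU.preimage (continuous_const.update i continuous_id)
  have hzV : z i ∈ {ζ | Function.update w i ζ ∈ U} := by simpa [hwz] using hw
  refine ⟨fun ζ => f (Function.update w i ζ) i, ?_, ?_⟩
  · have hfw : DifferentiableAt ℂ f (Function.update w i (z i)) :=
      hf.1.differentiableAt (hU.mem_nhds (by rwa [hwz]))
    exact (differentiableAt_pi.1 hfw i).comp (z i) (hasFDerivAt_update w (z i)).differentiableAt
  · filter_upwards [(continuous_apply i).continuousAt.preimage_mem_nhds (hV.mem_nhds hzV)]
      with z' hz'
    exact cnHoloExtension_apply hU hconv hf hz' (Function.update_self i (z' i) w)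

end Extension

end Blocks

/-- Every `ℂⁿ`-holomorphic function on a convex open set `U` extends to a
`ℂⁿ`-holomorphic function on the product of the block projections of `U`. -/
theorem cnHolo_extend_of_convex {n : ℕ} {l : Fin n → ℕ}
    (U : Set (∀ j, Fin (l j) → ℂ)) (hU : IsOpen U) (hconv : Convex ℝ U)
    (f : (∀ j, Fin (l j) → ℂ) → (Fin n → ℂ)) (hf : CnHolo U f) :
    ∃ g, CnHolo (Set.univ.pi (fun j => (fun z => z j) '' U)) g ∧
      Set.EqOn f g U :=
  ⟨cnHoloExtension U f,
    cnHolo_of_locally_blockwise fun _ hz => cnHoloExtension_eventuallyEq hU hconv hf hz,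
    fun _ hu => funext fun _ => (cnHoloExtension_apply hU hconv hf hu rfl).symm⟩
end
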